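/- arXiv:math/0701522 — 2 statements merged into one kernel-verified Lean document; each statement's English description precedes it below -/
import Mathlib

section
/- Let μ, ν be real numbers with 0 < μ < ν, let k be a natural number with k ≤ 6, and let ν₁, …, ν_k be real numbers. Then 8μ² − 6μν − 5ν² − 2·∑ᵢνᵢ² + 2ν·∑ᵢνᵢ < 0. -/
theorem exclusion_twisted_cubic (μ ν : ℝ) (hμ : 0 < μ) (hμν : μ < ν)
    (k : ℕ) (hk : k ≤ 6) (νs : Fin k → ℝ) :
    8 * μ ^ 2 - 6 * μ * ν - 5 * ν ^ 2 - 2 * ∑ i, (νs i) ^ 2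
      + 2 * ν * ∑ i, νs i < 0 := by
  have hsum : 2 * ν * ∑ i, νs i - 2 * ∑ i, (νs i) ^ 2 ≤ (k : ℝ) * (ν ^ 2 / 2) := by
    calc 2 * ν * ∑ i, νs i - 2 * ∑ i, (νs i) ^ 2
        = ∑ i, (2 * ν * νs i - 2 * (νs i) ^ 2) := by
          rw [Finset.sum_sub_distrib, Finset.mul_sum, Finset.mul_sum]
      _ ≤ ∑ _i : Fin k, (ν ^ 2 / 2) := by
          apply Finset.sum_le_sum
          intro i _
          nlinarith [sq_nonneg (2 * νs i - ν)]
      _ = (k : ℝ) * (ν ^ 2 / 2) := by simp [mul_comm]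
  have hk' : (k : ℝ) ≤ 6 := by exact_mod_cast hk
  nlinarith [sq_nonneg ν, mul_pos hμ (hμ.trans hμν), mul_le_mul_of_nonneg_right hk' (by positivity : (0:ℝ) ≤ ν ^ 2 / 2)]
end

section
/- Let K be a field, s ≥ 1, and p₁, …, p_s distinct points of ℙⁿ(K). Suppose p₁, …, p_{s−1} lie in a hyperplane H and p_s ∉ H. If the points p₁, …, p_{s−1} impose independent conditions on degree-d forms on H (d ≥ 1), then p₁, …, p_s impose independent conditions on degree-d forms on ℙⁿ. (Hint: take cones with vertex p_s over divisors in H, and a degree-d hypersurface through p₁,…,p_{s−1} missing p_s obtained as a cone over a suitable divisor.) -/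
open MvPolynomial

/-! A form `g` on `H = {x_n = 0}` extends to the forms `g(x₀, …, x_{n-1}) + t x_nᵈ` on `ℙⁿ`,
which all agree with `g` on `H` (as `d ≥ 1`), while their value at `v ∉ H` sweeps out all of `K`
as `t` varies, because `v_n ≠ 0`. -/

namespace MvPolynomial

variable {R : Type*} [CommRing R] {n : ℕ}

theorem eval_rename_castSucc_add_C_mul_X_last_pow (g : MvPolynomial (Fin n) R) (t : R) (d : ℕ)
    (x : Fin (n + 1) → R) :
    eval x (rename Fin.castSucc g + C t * X (Fin.last n) ^ d) =
      eval (x ∘ Fin.castSucc) g + t * x (Fin.last n) ^ d := by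
  simp [eval_rename]

theorem IsHomogeneous.rename_castSucc_add_C_mul_X_last_pow {g : MvPolynomial (Fin n) R}
    {d : ℕ} (hg : g.IsHomogeneous d) (t : R) :
    (rename Fin.castSucc g + C t * X (Fin.last n) ^ d).IsHomogeneous d :=
  hg.rename_isHomogeneous.add (isHomogeneous_C_mul_X_pow t _ d)

end MvPolynomial

theorem exists_isHomogeneous_extension_eval_eq {K : Type*} [Field K] {n d : ℕ} (hd : d ≠ 0)
    {g : MvPolynomial (Fin n) K} (hg : g.IsHomogeneous d) {v : Fin (n + 1) → K}
    (hv : v (Fin.last n) ≠ 0) (b : K) :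
    ∃ F : MvPolynomial (Fin (n + 1)) K, F.IsHomogeneous d ∧
      (∀ x : Fin (n + 1) → K, x (Fin.last n) = 0 → eval x F = eval (x ∘ Fin.castSucc) g) ∧
      eval v F = b := by
  set t := (b - eval (v ∘ Fin.castSucc) g) / v (Fin.last n) ^ d
  refine ⟨rename Fin.castSucc g + C t * X (Fin.last n) ^ d,
    hg.rename_castSucc_add_C_mul_X_last_pow t, fun x hx => ?_, ?_⟩
  · simp [eval_rename_castSucc_add_C_mul_X_last_pow, hx, hd]
  · rw [eval_rename_castSucc_add_C_mul_X_last_pow, div_mul_cancel₀ _ (pow_ne_zero d hv)]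
    ring

theorem independent_conditions_cone_argument_general
    {K : Type*} [Field K] (n s d : ℕ) (hd : 1 ≤ d)
    (q : Fin s → (Fin (n + 1) → K)) (v : Fin (n + 1) → K)
    (hqH : ∀ i, q i (Fin.last n) = 0)
    (hvH : v (Fin.last n) ≠ 0)
    (hind : Function.Surjective
      (fun g : {g : MvPolynomial (Fin n) K // g.IsHomogeneous d} =>
        fun i : Fin s => eval ((q i) ∘ Fin.castSucc) g.1)) :
    Function.Surjective
      (fun F : {F : MvPolynomial (Fin (n + 1)) K // F.IsHomogeneous d} =>
        ((fun i : Fin s => eval (q i) F.1), eval v F.1)) := by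
  rintro ⟨a, b⟩
  obtain ⟨⟨g, hg⟩, hga⟩ := hind a
  obtain ⟨F, hF, hFH, hFv⟩ := exists_isHomogeneous_extension_eval_eq (by omega) hg hvH b
  refine ⟨⟨F, hF⟩, Prod.ext (funext fun i => ?_) hFv⟩
  exact (hFH (q i) (hqH i)).trans (congrFun hga i)

/-- Points `q 0, …, q (s-1)` lie in the hyperplane `H = {x_n = 0}` of `ℙⁿ` and
`v ∉ H`.  If the points `q i` impose independent conditions on degree-`d` forms
on `H ≅ ℙ^{n-1}` (coordinates `x₀, …, x_{n-1}`), then all the points together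
impose independent conditions on degree-`d` forms on `ℙⁿ`. -/
theorem independent_conditions_cone_argument
    {K : Type*} [Field K] (n s d : ℕ) (hs : 1 ≤ s) (hd : 1 ≤ d)
    (q : Fin s → (Fin (n + 1) → K)) (v : Fin (n + 1) → K)
    (hq0 : ∀ i, q i ≠ 0) (hv0 : v ≠ 0)
    (hqH : ∀ i, q i (Fin.last n) = 0)
    (hvH : v (Fin.last n) ≠ 0)
    (hdist : ∀ i j : Fin s, i ≠ j → ¬ ∃ c : K, q j = c • q i)
    (hind : Function.Surjective
      (fun g : {g : MvPolynomial (Fin n) K // g.IsHomogeneous d} =>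
        fun i : Fin s => eval ((q i) ∘ Fin.castSucc) g.1)) :
    Function.Surjective
      (fun F : {F : MvPolynomial (Fin (n + 1)) K // F.IsHomogeneous d} =>
        ((fun i : Fin s => eval (q i) F.1), eval v F.1)) :=
  independent_conditions_cone_argument_general n s d hd q v hqH hvH hind
end
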